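/- arXiv:1504.02268 — 3 statements merged into one kernel-verified Lean document; each statement's English description precedes it below -/
import Mathlib

section
/- Let G = (V,E) be a finite simple graph, fix α ≥ 1, d ≥ 0, ε ∈ (0,1), and any positive integer L. Let (Z_1, …, Z_L) be an (α, d, L)-decomposition of G, and let S* be a nonempty densest subgraph (a maximizer of ρ(S) = |E(S)|/|S|). If d < ρ(S*)/α, then S* ⊆ Z_i for every i ∈ {1,…,L}; in particular Z_L ≠ ∅. -/
open Finset
open scoped Classical

variable {V : Type*} [Fintype V] [DecidableEq V]

/-- Degree of `v` within the node set `S`: number of neighbors of `v` inside `S`. -/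
noncomputable def degIn (G : SimpleGraph V) (v : V) (S : Finset V) : ℕ :=
  (S.filter fun u => G.Adj v u).card

/-- The set of edges of `G` with both endpoints in `S`. -/
noncomputable def edgesIn (G : SimpleGraph V) (S : Finset V) : Finset (Sym2 V) :=
  G.edgeFinset.filter fun e => ∀ v ∈ e, v ∈ S

/-- Density of the subgraph induced by `S`: `|E(S)|/|S|`. -/
noncomputable def density (G : SimpleGraph V) (S : Finset V) : ℝ :=
  (edgesIn G S).card / S.card

/-- An `(α, d, L)`-decomposition of `G`: a chain `V = Z 1 ⊇ Z 2 ⊇ ⋯ ⊇ Z L` such that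
every node of `Z i` with degree `> α d` inside `Z i` is included in `Z (i+1)`, and
no node of `Z i` with degree `< d` inside `Z i` belongs to `Z (i+1)`. -/
def IsDecomp (G : SimpleGraph V) (α d : ℝ) (L : ℕ) (Z : ℕ → Finset V) : Prop :=
  Z 1 = Finset.univ ∧
  (∀ i, 1 ≤ i → i < L → Z (i + 1) ⊆ Z i) ∧
  (∀ i, 1 ≤ i → i < L → ∀ v ∈ Z i, α * d < (degIn G v (Z i) : ℝ) → v ∈ Z (i + 1)) ∧
  (∀ i, 1 ≤ i → i < L → ∀ v ∈ Z i, (degIn G v (Z i) : ℝ) < d → v ∉ Z (i + 1))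

/-! A densest subgraph `S*` has minimum degree at least `ρ(S*)`: removing a vertex of smaller
degree would leave a denser subgraph. Since `α d < ρ(S*)`, every vertex of `S*` then has degree
`> α d` inside `S*`, hence inside every level `Z i ⊇ S*`, so by induction on `i` no peeling step
removes a vertex of `S*`. -/

lemma degIn_mono {W : Type*} (G : SimpleGraph W) (v : W) {S T : Finset W} (h : S ⊆ T) :
    degIn G v S ≤ degIn G v T :=
  card_le_card (filter_subset_filter _ h)

lemma edgesIn_empty (G : SimpleGraph V) : edgesIn G ∅ = ∅ :=
  filter_eq_empty_iff.2 fun e _ he => notMem_empty _ (he _ e.out_fst_mem)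

lemma edgesIn_erase (G : SimpleGraph V) (S : Finset V) (v : V) :
    edgesIn G (S.erase v) = {e ∈ edgesIn G S | v ∉ e} := by
  ext e
  simp only [edgesIn, mem_filter, mem_erase]
  constructor
  · rintro ⟨he, h⟩
    exact ⟨⟨he, fun w hw => (h w hw).2⟩, fun hv => (h v hv).1 rfl⟩
  · rintro ⟨⟨he, h⟩, hv⟩
    exact ⟨he, fun w hw => ⟨fun hwv => hv (hwv ▸ hw), h w hw⟩⟩

lemma filter_mem_edgesIn_eq_map (G : SimpleGraph V) {S : Finset V} {v : V} (hv : v ∈ S) :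
    {e ∈ edgesIn G S | v ∈ e} = {u ∈ S | G.Adj v u}.map (Sym2.mkEmbedding v) := by
  ext e
  simp only [edgesIn, mem_filter, mem_map, SimpleGraph.mem_edgeFinset, Sym2.mkEmbedding_apply]
  constructor
  · rintro ⟨⟨he, hS⟩, hve⟩
    refine ⟨Sym2.Mem.other hve, ⟨hS _ (Sym2.other_mem hve), ?_⟩, Sym2.other_spec hve⟩
    rwa [← SimpleGraph.mem_edgeSet, Sym2.other_spec hve]
  · rintro ⟨u, ⟨hu, hvu⟩, rfl⟩
    refine ⟨⟨hvu, fun w hw => ?_⟩, Sym2.mem_mk_left v u⟩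
    rcases Sym2.mem_iff.1 hw with rfl | rfl <;> assumption

lemma card_edgesIn_erase_add_degIn (G : SimpleGraph V) {S : Finset V} {v : V} (hv : v ∈ S) :
    #(edgesIn G (S.erase v)) + degIn G v S = #(edgesIn G S) := by
  rw [edgesIn_erase, degIn, ← card_map (Sym2.mkEmbedding v), ← filter_mem_edgesIn_eq_map G hv]
  exact (add_comm _ _).trans (card_filter_add_card_filter_not _)

/-- `(a + k) / (n + 1)` is the mediant of `a / n` and `k / 1`, so it lies between them. -/
lemma add_div_add_one_le_of_div_le_add_div_add_one {a k n : ℝ} (hn : 0 < n)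
    (h : a / n ≤ (a + k) / (n + 1)) : (a + k) / (n + 1) ≤ k := by
  rw [div_le_div_iff₀ hn (by linarith)] at h
  rw [div_le_iff₀ (by linarith)]
  nlinarith

lemma density_le_degIn_of_forall_density_le (G : SimpleGraph V) {S : Finset V}
    (hmax : ∀ T : Finset V, T.Nonempty → density G T ≤ density G S) {v : V} (hv : v ∈ S) :
    density G S ≤ degIn G v S := by
  have hedges := card_edgesIn_erase_add_degIn G hv
  have hcard := card_erase_add_one hv
  rcases (S.erase v).eq_empty_or_nonempty with hempty | hrest
  · rw [hempty, edgesIn_empty] at hedges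
    rw [hempty] at hcard
    simp [density, ← hedges, ← hcard]
  · have hle := hmax _ hrest
    rw [density, density, ← hedges, ← hcard] at hle
    rw [density, ← hedges, ← hcard]
    push_cast at hle ⊢
    exact add_div_add_one_le_of_div_le_add_div_add_one (by exact_mod_cast hrest.card_pos) hle

lemma IsDecomp.subset_of_lt_degIn {W : Type*} [Fintype W] {G : SimpleGraph W} {α d : ℝ} {L : ℕ}
    {Z : ℕ → Finset W} (hZ : IsDecomp G α d L Z) {S : Finset W}
    (hS : ∀ v ∈ S, α * d < degIn G v S) {i : ℕ} (hi : 1 ≤ i) (hiL : i ≤ L) : S ⊆ Z i := by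
  induction i, hi using Nat.le_induction with
  | base => exact hZ.1 ▸ subset_univ S
  | succ k hk ih =>
    have hSk := ih (by omega)
    exact fun v hv => hZ.2.2.1 k hk (by omega) v (hSk hv)
      ((hS v hv).trans_le (by exact_mod_cast degIn_mono G v hSk))

theorem decomp_top_level_nonempty_general (G : SimpleGraph V) (α d : ℝ)
    (hα : 1 ≤ α) (L : ℕ) (hL : 1 ≤ L)
    (Z : ℕ → Finset V) (hZ : IsDecomp G α d L Z)
    (Sstar : Finset V) (hne : Sstar.Nonempty)
    (hmax : ∀ S : Finset V, S.Nonempty → density G S ≤ density G Sstar)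
    (hsmall : d < density G Sstar / α) :
    (∀ i, 1 ≤ i → i ≤ L → Sstar ⊆ Z i) ∧ Z L ≠ ∅ := by
  have hαd : α * d < density G Sstar := by
    rwa [lt_div_iff₀ (by linarith), mul_comm] at hsmall
  have hsub : ∀ i, 1 ≤ i → i ≤ L → Sstar ⊆ Z i := fun _ hi hiL =>
    hZ.subset_of_lt_degIn
      (fun _ hv => hαd.trans_le (density_le_degIn_of_forall_density_le G hmax hv)) hi hiL
  exact ⟨hsub, (hne.mono (hsub L hL le_rfl)).ne_empty⟩

/-- If `d < ρ(S*)/α`, then the densest subgraph `S*` survives in every level of an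
`(α,d,L)`-decomposition; in particular the topmost level is nonempty. -/
theorem decomp_top_level_nonempty (G : SimpleGraph V) (α d ε : ℝ)
    (hα : 1 ≤ α) (hd : 0 ≤ d) (hε0 : 0 < ε) (hε1 : ε < 1) (L : ℕ) (hL : 1 ≤ L)
    (Z : ℕ → Finset V) (hZ : IsDecomp G α d L Z)
    (Sstar : Finset V) (hne : Sstar.Nonempty)
    (hmax : ∀ S : Finset V, S.Nonempty → density G S ≤ density G Sstar)
    (hsmall : d < density G Sstar / α) :
    (∀ i, 1 ≤ i → i ≤ L → Sstar ⊆ Z i) ∧ Z L ≠ ∅ :=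
  decomp_top_level_nonempty_general G α d hα L hL Z hZ Sstar hne hmax hsmall
end

section
/- Let G = (V,E) be a directed graph with n = |V|, fix α ≥ 1, ε ∈ (0,1), d_S, d_T ≥ 0, and L = 2·(2 + ⌈log_{1+ε} n⌉). Let ((S_1,…,S_L),(T_1,…,T_L)) be an (α, d_S, d_T, L)-decomposition. If d_S·d_T > 4(1+ε)·λ_S·λ_T (with λ_S, λ_T as in the densest-pair min-degree bounds, so that ρ*(G) ≤ 2√(λ_S λ_T)), then S_L = ∅ and T_L = ∅. -/
open Finset
open scoped Classical

variable {V : Type*} [Fintype V] [DecidableEq V]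

/-- The set of directed edges of the relation `R` going from `S` to `T`. -/
noncomputable def edgesBtw (R : V → V → Prop) (S T : Finset V) : Finset (V × V) :=
  (S ×ˢ T).filter fun p => R p.1 p.2

/-- Out-degree of `s` into the node set `T`. -/
noncomputable def outDeg (R : V → V → Prop) (s : V) (T : Finset V) : ℕ :=
  (T.filter fun t => R s t).card

/-- In-degree of `t` from the node set `S`. -/
noncomputable def inDeg (R : V → V → Prop) (t : V) (S : Finset V) : ℕ :=
  (S.filter fun s => R s t).card

/-- Directed density `ρ(S,T) = |E(S,T)| / √(|S|·|T|)`. -/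
noncomputable def rhoD (R : V → V → Prop) (S T : Finset V) : ℝ :=
  (edgesBtw R S T).card / Real.sqrt ((S.card : ℝ) * T.card)

/-- An `(α, d_S, d_T, L)`-decomposition of a directed graph `R`. -/
def IsDirDecomp (R : V → V → Prop) (α dS dT : ℝ) (L : ℕ) (S T : ℕ → Finset V) : Prop :=
  S 1 = Finset.univ ∧ T 1 = Finset.univ ∧
  (∀ i, 1 ≤ i → i < L → S (i + 1) ⊆ S i ∧ T (i + 1) ⊆ T i) ∧
  (∀ i, 1 ≤ i → i < L → ∀ s ∈ S i, α * dS < (outDeg R s (T i) : ℝ) → s ∈ S (i + 1)) ∧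
  (∀ i, 1 ≤ i → i < L → ∀ s ∈ S i, (outDeg R s (T i) : ℝ) < dS → s ∉ S (i + 1)) ∧
  (∀ i, 1 ≤ i → i < L → ∀ t ∈ T i, α * dT < (inDeg R t (S i) : ℝ) → t ∈ T (i + 1)) ∧
  (∀ i, 1 ≤ i → i < L → ∀ t ∈ T i, (inDeg R t (S i) : ℝ) < dT → t ∉ T (i + 1))

/-!
Since `(S*, T*)` is densest, every pair satisfies `|E(A,B)| ≤ ρ √(|A||B|)` with
`ρ = ρ(S*,T*)`, and `λ_S ≥ |E*| / (2|S*|)`, `λ_T ≥ |E*| / (2|T*|)` turn the hypothesis into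
`(1+ε) ρ² ≤ d_S d_T`. Every vertex of `S_{i+1}` has out-degree at least `d_S` into `T_i`, so
`|S_{i+1}| d_S ≤ ρ √(|S_{i+1}||T_i|)`, i.e. `(1+ε) |S_{i+1}| d_S ≤ |T_i| d_T`, and
symmetrically. Hence `|S_i||T_i|` drops by a factor `(1+ε)²` per level. A nonempty top level
forces both `S_{L-1}` and `T_{L-1}` to be nonempty, so `(1+ε)^{2(L-2)} ≤ n²`, which the choice
of `L` forbids.
-/

section

omit [Fintype V] [DecidableEq V]

lemma card_edgesBtw_eq_sum_outDeg (R : V → V → Prop) (S T : Finset V) :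
    (edgesBtw R S T).card = ∑ s ∈ S, outDeg R s T := by
  rw [edgesBtw, card_filter, sum_product]
  exact sum_congr rfl fun s _ => (card_filter _ _).symm

lemma card_edgesBtw_eq_sum_inDeg (R : V → V → Prop) (S T : Finset V) :
    (edgesBtw R S T).card = ∑ t ∈ T, inDeg R t S := by
  rw [edgesBtw, card_filter, sum_product_right]
  exact sum_congr rfl fun t _ => (card_filter _ _).symm

lemma card_edgesBtw_le_mul_sqrt {R : V → V → Prop} {ρ : ℝ}
    (hρ : ∀ A B : Finset V, A.Nonempty → B.Nonempty → rhoD R A B ≤ ρ) (A B : Finset V) :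
    ((edgesBtw R A B).card : ℝ) ≤ ρ * √((A.card : ℝ) * B.card) := by
  rcases A.eq_empty_or_nonempty with rfl | hA
  · simp [edgesBtw]
  rcases B.eq_empty_or_nonempty with rfl | hB
  · simp [edgesBtw]
  have hpos : 0 < √((A.card : ℝ) * B.card) := by
    have := hA.card_pos; have := hB.card_pos; positivity
  simpa only [rhoD, div_le_iff₀ hpos] using hρ A B hA hB

lemma one_le_two_mul_mul_one_sub_sqrt {a : ℝ} (ha : 1 ≤ a) :
    1 ≤ 2 * a * (1 - √(1 - 1 / a)) := by
  have hsqrt : √(1 - 1 / a) ≤ 1 - 1 / a / 2 := by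
    have h1a : -1 ≤ -(1 / a) := neg_le_neg ((div_le_one₀ (by linarith)).2 ha)
    simpa [sub_eq_add_neg, neg_div] using Real.sqrt_one_add_le h1a
  have : 2 * a * (1 / a / 2) = 1 := by field_simp
  nlinarith

lemma sq_rhoD_le {R : V → V → Prop} {S T : Finset V} (hS : S.Nonempty) (hT : T.Nonempty) :
    rhoD R S T ^ 2 ≤ 4 * (((edgesBtw R S T).card : ℝ) * (1 - √(1 - 1 / S.card)) *
      (((edgesBtw R S T).card : ℝ) * (1 - √(1 - 1 / T.card)))) := by
  set m : ℝ := ((edgesBtw R S T).card : ℝ)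
  have ha : (1 : ℝ) ≤ S.card := by exact_mod_cast hS.card_pos
  have hb : (1 : ℝ) ≤ T.card := by exact_mod_cast hT.card_pos
  have hm : 0 ≤ m := by positivity
  have hmS := mul_le_mul_of_nonneg_left (one_le_two_mul_mul_one_sub_sqrt ha) hm
  have hmT := mul_le_mul_of_nonneg_left (one_le_two_mul_mul_one_sub_sqrt hb) hm
  rw [rhoD, div_pow, Real.sq_sqrt (by positivity), div_le_iff₀ (by positivity)]
  calc m ^ 2 = (m * 1) * (m * 1) := by ring
    _ ≤ (m * (2 * S.card * (1 - √(1 - 1 / S.card)))) *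
          (m * (2 * T.card * (1 - √(1 - 1 / T.card)))) :=
        mul_le_mul hmS hmT (by positivity) (by nlinarith)
    _ = _ := by ring

end

lemma lt_pow_sub_two_of_eq_two_mul_two_add_ceil_logb {b x : ℝ} (hb : 1 < b) (hx : 1 ≤ x)
    {L : ℕ} (hL : (L : ℤ) = 2 * (2 + ⌈Real.logb b x⌉)) : x < b ^ (L - 2) := by
  have hc : 0 ≤ ⌈Real.logb b x⌉ := Int.ceil_nonneg (Real.logb_nonneg hb hx)
  have hL2 : ((L - 2 : ℕ) : ℤ) = 2 + 2 * ⌈Real.logb b x⌉ := by omega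
  rw [← Real.rpow_natCast, ← Real.logb_lt_iff_lt_rpow hb (by linarith)]
  have hc' : (0 : ℝ) ≤ ⌈Real.logb b x⌉ := by exact_mod_cast hc
  have hL2' : ((L - 2 : ℕ) : ℝ) = 2 + 2 * ⌈Real.logb b x⌉ := by exact_mod_cast hL2
  linarith [Int.le_ceil (Real.logb b x)]

lemma mul_mul_le_of_mul_le_mul_sqrt {a b d d' ρ c : ℝ} (ha : 0 ≤ a) (hb : 0 ≤ b) (hd : 0 < d)
    (hc : 0 ≤ c) (h : a * d ≤ ρ * √(a * b)) (hρ : c * ρ ^ 2 ≤ d * d') :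
    c * a * d ≤ b * d' := by
  have hd' : 0 ≤ d' := nonneg_of_mul_nonneg_right ((mul_nonneg hc (sq_nonneg ρ)).trans hρ) hd
  rcases ha.eq_or_lt with rfl | ha
  · simpa using mul_nonneg hb hd'
  have hsq : a * d ^ 2 ≤ ρ ^ 2 * b := by
    have := pow_le_pow_left₀ (by positivity) h 2
    rw [mul_pow, mul_pow, Real.sq_sqrt (by positivity)] at this
    nlinarith
  have : c * a * d * d ≤ b * d' * d := by nlinarith [mul_le_mul_of_nonneg_left hsq hc]
  exact le_of_mul_le_mul_right this hd

lemma pow_mul_le_of_forall_mul_le {α : Type*} [Semiring α] [PartialOrder α] [IsOrderedRing α]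
    {f : ℕ → α} {q : α} (hq : 0 ≤ q) {m n : ℕ}
    (h : ∀ k, m ≤ k → k < n → q * f (k + 1) ≤ f k) :
    ∀ j, m + j ≤ n → q ^ j * f (m + j) ≤ f m
  | 0, _ => by simp
  | j + 1, hj => calc
      q ^ (j + 1) * f (m + (j + 1)) = q ^ j * (q * f (m + j + 1)) := by
        rw [pow_succ, mul_assoc, ← add_assoc]
      _ ≤ q ^ j * f (m + j) :=
        mul_le_mul_of_nonneg_left (h _ (by omega) (by omega)) (pow_nonneg hq j)
      _ ≤ f m := pow_mul_le_of_forall_mul_le hq h j (by omega)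

namespace IsDirDecomp

variable {R : V → V → Prop} {α dS dT : ℝ} {L : ℕ} {S T : ℕ → Finset V}

omit [DecidableEq V]

lemma card_mul_le_card_edgesBtw_left (hdec : IsDirDecomp R α dS dT L S T) {i : ℕ} (hi : 1 ≤ i)
    (hiL : i < L) : ((S (i + 1)).card : ℝ) * dS ≤ (edgesBtw R (S (i + 1)) (T i)).card := by
  obtain ⟨-, -, hsub, -, hdel, -, -⟩ := hdec
  rw [card_edgesBtw_eq_sum_outDeg, Nat.cast_sum, ← nsmul_eq_mul, ← sum_const]
  refine sum_le_sum fun s hs => ?_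
  by_contra! hlt
  exact hdel i hi hiL s ((hsub i hi hiL).1 hs) hlt hs

lemma card_mul_le_card_edgesBtw_right (hdec : IsDirDecomp R α dS dT L S T) {i : ℕ} (hi : 1 ≤ i)
    (hiL : i < L) : ((T (i + 1)).card : ℝ) * dT ≤ (edgesBtw R (S i) (T (i + 1))).card := by
  obtain ⟨-, -, hsub, -, -, -, hdel⟩ := hdec
  rw [card_edgesBtw_eq_sum_inDeg, Nat.cast_sum, ← nsmul_eq_mul, ← sum_const]
  refine sum_le_sum fun t ht => ?_
  by_contra! hlt
  exact hdel i hi hiL t ((hsub i hi hiL).2 ht) hlt ht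

lemma nonempty_of_nonempty_succ (hdec : IsDirDecomp R α dS dT L S T) (hdS : 0 < dS) (hdT : 0 < dT)
    {i : ℕ} (hi : 1 ≤ i) (hiL : i < L) (h : (S (i + 1)).Nonempty ∨ (T (i + 1)).Nonempty) :
    (S i).Nonempty ∧ (T i).Nonempty := by
  have hS := hdec.card_mul_le_card_edgesBtw_left hi hiL
  have hT := hdec.card_mul_le_card_edgesBtw_right hi hiL
  have hsub := hdec.2.2.1 i hi hiL
  rcases h with h | h
  · refine ⟨h.mono hsub.1, nonempty_iff_ne_empty.2 fun hTi => ?_⟩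
    have : (0 : ℝ) < (S (i + 1)).card := by exact_mod_cast h.card_pos
    simp only [hTi, edgesBtw, product_empty, filter_empty, card_empty, Nat.cast_zero] at hS
    nlinarith
  · refine ⟨nonempty_iff_ne_empty.2 fun hSi => ?_, h.mono hsub.2⟩
    have : (0 : ℝ) < (T (i + 1)).card := by exact_mod_cast h.card_pos
    simp only [hSi, edgesBtw, empty_product, filter_empty, card_empty, Nat.cast_zero] at hT
    nlinarith

lemma sq_mul_card_mul_card_succ_le (hdec : IsDirDecomp R α dS dT L S T) (hdS : 0 < dS)
    (hdT : 0 < dT) {ρ c : ℝ} (hc : 0 ≤ c)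
    (hE : ∀ A B : Finset V, ((edgesBtw R A B).card : ℝ) ≤ ρ * √((A.card : ℝ) * B.card))
    (hρ : c * ρ ^ 2 ≤ dS * dT) {i : ℕ} (hi : 1 ≤ i) (hiL : i < L) :
    c ^ 2 * (((S (i + 1)).card : ℝ) * (T (i + 1)).card) ≤ ((S i).card : ℝ) * (T i).card := by
  have hS : c * (S (i + 1)).card * dS ≤ (T i).card * dT :=
    mul_mul_le_of_mul_le_mul_sqrt (by positivity) (by positivity) hdS hc
      ((hdec.card_mul_le_card_edgesBtw_left hi hiL).trans (hE _ _)) hρ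
  have hT : c * (T (i + 1)).card * dT ≤ (S i).card * dS := by
    refine mul_mul_le_of_mul_le_mul_sqrt (by positivity) (by positivity) hdT hc
      ((hdec.card_mul_le_card_edgesBtw_right hi hiL).trans ?_) (by linarith)
    rw [mul_comm ((T (i + 1)).card : ℝ)]
    exact hE _ _
  have := mul_le_mul hS hT (by positivity) (by positivity)
  refine le_of_mul_le_mul_right ?_ (mul_pos hdS hdT)
  linarith

lemma sq_pow_mul_card_mul_card_le (hdec : IsDirDecomp R α dS dT L S T) (hdS : 0 < dS)
    (hdT : 0 < dT) {ρ c : ℝ} (hc : 0 ≤ c)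
    (hE : ∀ A B : Finset V, ((edgesBtw R A B).card : ℝ) ≤ ρ * √((A.card : ℝ) * B.card))
    (hρ : c * ρ ^ 2 ≤ dS * dT) {j : ℕ} (hj : 1 + j ≤ L) :
    (c ^ 2) ^ j * (((S (1 + j)).card : ℝ) * (T (1 + j)).card) ≤ (Fintype.card V : ℝ) ^ 2 := by
  have h := pow_mul_le_of_forall_mul_le (f := fun k => ((S k).card : ℝ) * (T k).card)
    (sq_nonneg c) (fun k hk hkL => hdec.sq_mul_card_mul_card_succ_le hdS hdT hc hE hρ hk hkL) j hj
  simpa only [hdec.1, hdec.2.1, card_univ, ← sq] using h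

end IsDirDecomp

theorem directed_decomp_top_level_empty_general (R : V → V → Prop) (α dS dT ε : ℝ)
    (hε0 : 0 < ε) (hdS : 0 ≤ dS) (L : ℕ)
    (hL : (L : ℤ) = 2 * (2 + ⌈Real.logb (1 + ε) (Fintype.card V)⌉))
    (S T : ℕ → Finset V) (hdec : IsDirDecomp R α dS dT L S T)
    (Sstar Tstar : Finset V) (hSne : Sstar.Nonempty) (hTne : Tstar.Nonempty)
    (hmax : ∀ A B : Finset V, A.Nonempty → B.Nonempty →
      rhoD R A B ≤ rhoD R Sstar Tstar)
    (lamS lamT : ℝ)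
    (hlS : lamS = ((edgesBtw R Sstar Tstar).card : ℝ) *
      (1 - Real.sqrt (1 - 1 / Sstar.card)))
    (hlT : lamT = ((edgesBtw R Sstar Tstar).card : ℝ) *
      (1 - Real.sqrt (1 - 1 / Tstar.card)))
    (hbig : 4 * (1 + ε) * (lamS * lamT) < dS * dT) :
    S L = ∅ ∧ T L = ∅ := by
  set ρ := rhoD R Sstar Tstar
  have hρlam : (1 + ε) * ρ ^ 2 ≤ 4 * (1 + ε) * (lamS * lamT) := by
    have := sq_rhoD_le (R := R) hSne hTne
    rw [← hlS, ← hlT] at this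
    nlinarith
  have hρ : (1 + ε) * ρ ^ 2 ≤ dS * dT := hρlam.trans hbig.le
  have hdSdT : 0 < dS * dT := ((mul_nonneg (by linarith) (sq_nonneg ρ)).trans hρlam).trans_lt hbig
  have hdT_pos : 0 < dT := pos_of_mul_pos_right hdSdT hdS
  have hdS_pos : 0 < dS := pos_of_mul_pos_left hdSdT hdT_pos.le
  by_contra htop
  simp only [not_and_or, ← ne_eq, ← nonempty_iff_ne_empty] at htop
  have hn : 1 ≤ Fintype.card V := by
    obtain ⟨x, -⟩ | ⟨x, -⟩ := htop <;> exact Fintype.card_pos_iff.2 ⟨x⟩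
  have hn_lt := lt_pow_sub_two_of_eq_two_mul_two_add_ceil_logb (x := Fintype.card V)
    (by linarith) (by exact_mod_cast hn) hL
  have hL : 2 ≤ L := by
    by_contra! hL
    rw [Nat.sub_eq_zero_of_le hL.le, pow_zero] at hn_lt
    exact absurd hn_lt (not_lt.2 (by exact_mod_cast hn))
  have hlast := hdec.nonempty_of_nonempty_succ hdS_pos hdT_pos (i := L - 1) (by omega) (by omega)
    (by rwa [Nat.sub_add_cancel (by omega)])
  have hiter := hdec.sq_pow_mul_card_mul_card_le hdS_pos hdT_pos (by linarith)
    (card_edgesBtw_le_mul_sqrt hmax) hρ (j := L - 2) (by omega)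
  rw [show 1 + (L - 2) = L - 1 by omega, pow_right_comm] at hiter
  have hone : (1 : ℝ) ≤ (S (L - 1)).card * (T (L - 1)).card := by
    exact_mod_cast Nat.one_le_iff_ne_zero.2 (mul_pos hlast.1.card_pos hlast.2.card_pos).ne'
  have := pow_lt_pow_left₀ hn_lt (by positivity) two_ne_zero
  nlinarith

/-- If `d_S·d_T > 4(1+ε)·λ_S·λ_T`, the topmost level of an
`(α, d_S, d_T, L)`-decomposition is empty. -/
theorem directed_decomp_top_level_empty (R : V → V → Prop) (α dS dT ε : ℝ)
    (hα : 1 ≤ α) (hε0 : 0 < ε) (hε1 : ε < 1) (hdS : 0 ≤ dS) (hdT : 0 ≤ dT) (L : ℕ)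
    (hL : (L : ℤ) = 2 * (2 + ⌈Real.logb (1 + ε) (Fintype.card V)⌉))
    (S T : ℕ → Finset V) (hdec : IsDirDecomp R α dS dT L S T)
    (Sstar Tstar : Finset V) (hSne : Sstar.Nonempty) (hTne : Tstar.Nonempty)
    (hmax : ∀ A B : Finset V, A.Nonempty → B.Nonempty →
      rhoD R A B ≤ rhoD R Sstar Tstar)
    (lamS lamT : ℝ)
    (hlS : lamS = ((edgesBtw R Sstar Tstar).card : ℝ) *
      (1 - Real.sqrt (1 - 1 / Sstar.card)))
    (hlT : lamT = ((edgesBtw R Sstar Tstar).card : ℝ) *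
      (1 - Real.sqrt (1 - 1 / Tstar.card)))
    (hbig : 4 * (1 + ε) * (lamS * lamT) < dS * dT) :
    S L = ∅ ∧ T L = ∅ :=
  directed_decomp_top_level_empty_general R α dS dT ε hε0 hdS L hL S T hdec Sstar Tstar hSne hTne
    hmax lamS lamT hlS hlT hbig
end

section
/- Let G = (V,E) be a finite simple graph, d > 0, α ≥ 1, and suppose V = Z_1 ⊇ ⋯ ⊇ Z_L is an (α,d,L)-decomposition with Z_L ≠ ∅. If additionally every level satisfies ρ(Z_i) < d/(2(1+ε)) for all i ∈ [L−1] with L = 2 + ⌈log_{1+ε} n⌉, n = |V|, ε ∈ (0,1), then we reach a contradiction; i.e., it cannot be the case that Z_L ≠ ∅ while all ρ(Z_i) < d/(2(1+ε)). -/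
open Finset
open scoped Classical

variable {V : Type*} [Fintype V] [DecidableEq V]

/-!
A vertex that survives from `Z i` to `Z (i+1)` has degree at least `d` in `Z i`, so double
counting the edges of `Z i` shows that a level of density below `d / (2(1+ε))` passes at most a
`1/(1+ε)` fraction of its vertices on. Over `L - 1 > log_{1+ε} n` levels the `n` vertices of
`Z 1 = V` thus shrink to fewer than one.
-/

def inducedOn (G : SimpleGraph V) (S : Finset V) : SimpleGraph V where
  Adj u v := G.Adj u v ∧ u ∈ S ∧ v ∈ S
  symm := ⟨fun _ _ ⟨h, hu, hv⟩ => ⟨h.symm, hv, hu⟩⟩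
  loopless := ⟨fun _ ⟨h, _⟩ => G.irrefl h⟩

lemma edgeFinset_inducedOn (G : SimpleGraph V) (S : Finset V) :
    (inducedOn G S).edgeFinset = edgesIn G S := by
  ext e
  induction e using Sym2.ind with
  | _ a b =>
    rw [SimpleGraph.mem_edgeFinset]
    simp only [SimpleGraph.mem_edgeFinset, SimpleGraph.mem_edgeSet, inducedOn, edgesIn,
      mem_filter, Sym2.forall_mem_pair]

omit [DecidableEq V] in
lemma degree_inducedOn_of_mem (G : SimpleGraph V) {S : Finset V} {v : V} (hv : v ∈ S) :
    (inducedOn G S).degree v = degIn G v S := by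
  rw [← SimpleGraph.card_neighborFinset_eq_degree, degIn]
  congr 1
  ext u
  rw [SimpleGraph.mem_neighborFinset]
  simp only [inducedOn, mem_filter, hv, true_and]
  tauto

omit [DecidableEq V] in
lemma degree_inducedOn_of_notMem (G : SimpleGraph V) {S : Finset V} {v : V} (hv : v ∉ S) :
    (inducedOn G S).degree v = 0 := by
  rw [← SimpleGraph.card_neighborFinset_eq_degree, card_eq_zero]
  ext u
  rw [SimpleGraph.mem_neighborFinset]
  simp [inducedOn, hv]

lemma sum_degIn_eq_two_mul_card_edgesIn (G : SimpleGraph V) (S : Finset V) :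
    ∑ v ∈ S, degIn G v S = 2 * #(edgesIn G S) := by
  rw [← edgeFinset_inducedOn, ← SimpleGraph.sum_degrees_eq_twice_card_edges,
    ← sum_subset (subset_univ S) fun v _ hv => degree_inducedOn_of_notMem G hv]
  exact sum_congr rfl fun v hv => (degree_inducedOn_of_mem G hv).symm

lemma card_mul_le_two_mul_card_edgesIn (G : SimpleGraph V) {S T : Finset V} {d : ℝ}
    (hTS : T ⊆ S) (hdeg : ∀ v ∈ T, d ≤ degIn G v S) :
    #T * d ≤ 2 * #(edgesIn G S) :=
  calc #T * d ≤ ∑ v ∈ T, (degIn G v S : ℝ) := by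
        simpa only [nsmul_eq_mul] using card_nsmul_le_sum T _ d hdeg
    _ ≤ ∑ v ∈ S, (degIn G v S : ℝ) := sum_le_sum_of_subset_of_nonneg hTS fun _ _ _ => by positivity
    _ = 2 * #(edgesIn G S) := by exact_mod_cast sum_degIn_eq_two_mul_card_edgesIn G S

lemma mul_card_le_card_of_density_lt (G : SimpleGraph V) {S T : Finset V} {c d : ℝ}
    (hc : 0 < c) (hTS : T ⊆ S) (hdeg : ∀ v ∈ T, d ≤ degIn G v S)
    (hdens : density G S < d / (2 * c)) :
    c * #T ≤ #S := by
  rcases T.eq_empty_or_nonempty with rfl | hT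
  · simp
  have hS : (0 : ℝ) < #S := by exact_mod_cast (hT.mono hTS).card_pos
  have hd : 0 < d := by
    have : 0 ≤ density G S := by unfold density; positivity
    have := this.trans_lt hdens
    rwa [div_pos_iff_of_pos_right (by positivity)] at this
  have hedges : (#(edgesIn G S) : ℝ) < d / (2 * c) * #S := by
    rwa [density, div_lt_iff₀ hS] at hdens
  refine le_of_mul_le_mul_left ?_ hd
  calc d * (c * #T) = c * (#T * d) := by ring
    _ ≤ c * (2 * #(edgesIn G S)) :=
        mul_le_mul_of_nonneg_left (card_mul_le_two_mul_card_edgesIn G hTS hdeg) hc.le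
    _ ≤ c * (2 * (d / (2 * c) * #S)) := by gcongr
    _ = d * #S := by field_simp

lemma pow_mul_le_of_forall_mul_succ_le {c : ℝ} (hc : 0 ≤ c) {f : ℕ → ℝ} {k : ℕ}
    (h : ∀ i < k, c * f (i + 1) ≤ f i) : c ^ k * f k ≤ f 0 := by
  induction k with
  | zero => simp
  | succ k ih =>
    calc c ^ (k + 1) * f (k + 1) = c ^ k * (c * f (k + 1)) := by ring
      _ ≤ c ^ k * f k := mul_le_mul_of_nonneg_left (h k k.lt_succ_self) (by positivity)
      _ ≤ f 0 := ih fun i hi => h i (hi.trans k.lt_succ_self)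

lemma lt_pow_of_logb_lt {b x : ℝ} (hb : 1 < b) {k : ℕ} (h : Real.logb b x < k) :
    x < b ^ k := by
  rcases le_or_gt x 0 with hx | hx
  · exact hx.trans_lt (by positivity)
  · rw [← Real.rpow_natCast]
    exact (Real.logb_lt_iff_lt_rpow hb hx).mp h

namespace IsDecomp

variable {G : SimpleGraph V} {α d : ℝ} {L : ℕ} {Z : ℕ → Finset V}

omit [DecidableEq V] in
lemma le_degIn_of_mem_succ (hZ : IsDecomp G α d L Z) {i : ℕ} (hi : 1 ≤ i) (hiL : i < L)
    {v : V} (hv : v ∈ Z (i + 1)) : d ≤ degIn G v (Z i) := by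
  by_contra! hlt
  exact hZ.2.2.2 i hi hiL v (hZ.2.1 i hi hiL hv) hlt hv

lemma pow_mul_card_le (hZ : IsDecomp G α d L Z) {c : ℝ} (hc : 0 < c) (hL : 1 ≤ L)
    (hdens : ∀ i, 1 ≤ i → i < L → density G (Z i) < d / (2 * c)) :
    c ^ (L - 1) * #(Z L) ≤ Fintype.card V := by
  have hshrink : ∀ i < L - 1, c * #(Z (i + 1 + 1)) ≤ (#(Z (i + 1)) : ℝ) := fun i hi =>
    mul_card_le_card_of_density_lt G hc (hZ.2.1 (i + 1) (by omega) (by omega))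
      (fun _ hv => hZ.le_degIn_of_mem_succ (by omega) (by omega) hv)
      (hdens (i + 1) (by omega) (by omega))
  have := pow_mul_le_of_forall_mul_succ_le hc.le (f := fun i => (#(Z (i + 1)) : ℝ)) hshrink
  rwa [Nat.sub_add_cancel hL, hZ.1, card_univ] at this

end IsDecomp

theorem nonempty_top_implies_dense_level_general (G : SimpleGraph V) (α d ε : ℝ)
    (hε0 : 0 < ε) (L : ℕ)
    (hL : (L : ℤ) = 2 + ⌈Real.logb (1 + ε) (Fintype.card V)⌉)
    (Z : ℕ → Finset V) (hZ : IsDecomp G α d L Z)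
    (hne : (Z L).Nonempty)
    (hall : ∀ i, 1 ≤ i → i < L → density G (Z i) < d / (2 * (1 + ε))) :
    False := by
  set x := Real.logb (1 + ε) (Fintype.card V)
  have hb : 1 < 1 + ε := by linarith
  have hV : 0 < Fintype.card V := hne.card_pos.trans_le (card_le_univ _)
  have hceil : 0 ≤ ⌈x⌉ := Int.ceil_nonneg (Real.logb_nonneg hb (Nat.one_le_cast.mpr hV))
  have hL1 : ((L - 1 : ℕ) : ℝ) = ⌈x⌉ + 1 := by
    exact_mod_cast (by omega : ((L - 1 : ℕ) : ℤ) = ⌈x⌉ + 1)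
  have hlog : x < (L - 1 : ℕ) := by
    rw [hL1]
    linarith [Int.le_ceil x]
  have hsmall : (Fintype.card V : ℝ) < (1 + ε) ^ (L - 1) := lt_pow_of_logb_lt hb hlog
  have hlarge : (1 + ε) ^ (L - 1) * #(Z L) ≤ (Fintype.card V : ℝ) :=
    hZ.pow_mul_card_le (by linarith) (by omega) hall
  have hZL : (1 : ℝ) ≤ #(Z L) := by exact_mod_cast hne.card_pos
  have := (le_mul_of_one_le_right (by positivity) hZL).trans hlarge
  linarith

/-- It cannot be that the topmost level of an `(α,d,L)`-decomposition is nonempty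
while every level `Z i`, `i ∈ {1,…,L−1}`, has density `< d/(2(1+ε))`. -/
theorem nonempty_top_implies_dense_level (G : SimpleGraph V) (α d ε : ℝ)
    (hα : 1 ≤ α) (hd : 0 < d) (hε0 : 0 < ε) (hε1 : ε < 1) (L : ℕ)
    (hL : (L : ℤ) = 2 + ⌈Real.logb (1 + ε) (Fintype.card V)⌉)
    (Z : ℕ → Finset V) (hZ : IsDecomp G α d L Z)
    (hne : (Z L).Nonempty)
    (hall : ∀ i, 1 ≤ i → i < L → density G (Z i) < d / (2 * (1 + ε))) :
    False :=
  nonempty_top_implies_dense_level_general G α d ε hε0 L hL Z hZ hne hall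
end
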